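/- arXiv:1709.02710 — 3 statements merged into one kernel-verified Lean document; each statement's English description precedes it below -/
import Mathlib

section
/- Let K₁ = (I - Q)K on L²(0,1), where K is integration from the left and Q is the orthogonal projection onto constant functions. If f ∈ L²(0,1) is continuous and u = K₁*K₁ f, then u is C² with -u'' = f, u(0) = 0 and u(1) = 0. -/
open MeasureTheory Set

/-- Left integration: `(Kf)(x) = ∫₀ˣ f(y) dy`. -/
noncomputable def Kop (f : ℝ → ℝ) (x : ℝ) : ℝ := ∫ y in (0:ℝ)..x, f y

/-- `Q`, the `L²(0,1)` orthogonal projection onto constants: `(Qf)(x) = ∫₀¹ f`. -/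
noncomputable def Qop (f : ℝ → ℝ) (_x : ℝ) : ℝ := ∫ y in (0:ℝ)..1, f y

/-- `K₁ = (I - Q)K`. -/
noncomputable def K1op (f : ℝ → ℝ) (x : ℝ) : ℝ := Kop f x - Qop (Kop f) x

/-- The adjoint `K₁* = K*(I - Q)` of `K₁` in `L²(0,1)`, where
`(K*g)(x) = ∫ₓ¹ g(y) dy`. -/
noncomputable def K1sop (f : ℝ → ℝ) (x : ℝ) : ℝ :=
  ∫ y in x..(1:ℝ), (f y - Qop f y)

/-- If `f` is continuous on `[0,1]` and `u = K₁*K₁ f`, then `u` is C² with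
`-u'' = f`, `u(0) = 0` and `u(1) = 0`. -/
theorem K1sK1_solves_dirichlet_bvp
    (f : ℝ → ℝ) (hf : ContinuousOn f (Icc (0:ℝ) 1))
    (u : ℝ → ℝ) (hu : ∀ x ∈ Icc (0:ℝ) 1, u x = K1sop (K1op f) x) :
    ∃ u' : ℝ → ℝ,
      ContinuousOn u' (Icc (0:ℝ) 1) ∧
      (∀ x ∈ Icc (0:ℝ) 1, HasDerivWithinAt u (u' x) (Icc (0:ℝ) 1) x) ∧
      (∀ x ∈ Icc (0:ℝ) 1, HasDerivWithinAt u' (-(f x)) (Icc (0:ℝ) 1) x) ∧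
      u 0 = 0 ∧ u 1 = 0 := by
  -- Extend `f` continuously to all of `ℝ`.
  set F : ℝ → ℝ := IccExtend (zero_le_one) ((Icc (0:ℝ) 1).restrict f) with hFdef
  have hF : Continuous F := (continuousOn_iff_continuous_restrict.mp hf).Icc_extend'
  have hFe : EqOn F f (Icc (0:ℝ) 1) := fun x hx => by
    simp [hFdef, IccExtend_of_mem _ _ hx, Set.restrict_apply]; rfl
  -- The primitive of `F`.
  set G : ℝ → ℝ := fun x => ∫ y in (0:ℝ)..x, F y with hGdef
  have hG : ∀ x : ℝ, HasDerivAt G (F x) x := fun x =>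
    intervalIntegral.integral_hasDerivAt_right (hF.intervalIntegrable 0 x)
      (hF.stronglyMeasurableAtFilter volume (nhds x)) hF.continuousAt
  have hGc : Continuous G := by
    have : Differentiable ℝ G := fun x => (hG x).differentiableAt
    exact this.continuous
  set d : ℝ := ∫ y in (0:ℝ)..1, G y with hddef
  -- `Kop f = G` on `[0,1]`.
  have hKG : ∀ x ∈ Icc (0:ℝ) 1, Kop f x = G x := by
    intro x hx
    apply intervalIntegral.integral_congr
    intro y hy
    have : y ∈ Icc (0:ℝ) 1 := by
      rcases hx with ⟨hx0, hx1⟩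
      rw [uIcc_of_le hx0] at hy
      exact ⟨hy.1, hy.2.trans hx1⟩
    exact (hFe this).symm
  -- `Qop (Kop f) = d`.
  have hQK : ∀ x : ℝ, Qop (Kop f) x = d := by
    intro x
    unfold Qop
    rw [hddef]
    apply intervalIntegral.integral_congr
    intro y hy
    rw [uIcc_of_le (zero_le_one)] at hy
    exact hKG y hy
  -- `K1op f = G - d` on `[0,1]`.
  have hK1 : ∀ y ∈ Icc (0:ℝ) 1, K1op f y = G y - d := by
    intro y hy
    unfold K1op
    rw [hQK y, hKG y hy]
  have hGd_int : IntervalIntegrable (fun y => G y - d) volume 0 1 :=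
    (hGc.sub continuous_const).intervalIntegrable 0 1
  have hint01 : (∫ y in (0:ℝ)..1, (G y - d)) = 0 := by
    rw [intervalIntegral.integral_sub (hGc.intervalIntegrable 0 1)
      (intervalIntegrable_const), intervalIntegral.integral_const]
    simp [hddef]
  -- `Qop (K1op f) = 0`.
  have hQK1 : ∀ x : ℝ, Qop (K1op f) x = 0 := by
    intro x
    unfold Qop
    rw [show (∫ y in (0:ℝ)..1, K1op f y) = ∫ y in (0:ℝ)..1, (G y - d) from
      intervalIntegral.integral_congr (fun y hy => by
        rw [uIcc_of_le (zero_le_one)] at hy; exact hK1 y hy), hint01]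
  -- The honest formula for `u`.
  set v : ℝ → ℝ := fun x => ∫ y in x..(1:ℝ), (G y - d) with hvdef
  have huv : ∀ x ∈ Icc (0:ℝ) 1, u x = v x := by
    intro x hx
    rw [hu x hx]
    unfold K1sop
    apply intervalIntegral.integral_congr
    intro y hy
    have hy' : y ∈ Icc (0:ℝ) 1 := by
      rcases hx with ⟨hx0, hx1⟩
      rw [uIcc_of_le hx1] at hy
      exact ⟨hx0.trans hy.1, hy.2⟩
    simp only []
    rw [hQK1 y, hK1 y hy', sub_zero]
  have hv : ∀ x : ℝ, HasDerivAt v (-(G x - d)) x := fun x =>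
    intervalIntegral.integral_hasDerivAt_left
      ((hGc.sub continuous_const).intervalIntegrable x 1)
      ((hGc.sub continuous_const).stronglyMeasurableAtFilter volume (nhds x))
      (hGc.sub continuous_const).continuousAt
  refine ⟨fun x => -(G x - d), ((hGc.neg.add (continuous_const (y := d))).continuousOn).congr
      (fun x _ => by rw [Pi.add_apply, Pi.neg_apply]; ring), ?_, ?_, ?_, ?_⟩
  · intro x hx
    exact ((hv x).hasDerivWithinAt).congr (fun y hy => huv y hy) (huv x hx)
  · intro x hx
    have : HasDerivAt (fun x => -(G x - d)) (-(F x)) x := by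
      exact ((hG x).sub_const d).neg
    rw [← hFe hx]
    exact this.hasDerivWithinAt
  · rw [huv 0 (by norm_num), hvdef]
    simpa using hint01
  · rw [huv 1 (by norm_num), hvdef]
    simp
end

section
/- Let K₁ = (I - Q)K, where K is left integration on L²(0,1) and Q is the orthogonal projection onto constants. For each positive integer n, φₙ(x) = sin(nπx) is an eigenfunction of K₁*K₁ with eigenvalue 1/(nπ)², and ψₙ(x) = cos(nπx) is an eigenfunction of K₁K₁* with the same eigenvalue. -/
open MeasureTheory Set Real

lemma isin (a : ℝ) (c d : ℝ) (ha : a ≠ 0) :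
    ∫ y in c..d, Real.sin (a*y) = (Real.cos (a*c) - Real.cos (a*d))/a := by
  rw [intervalIntegral.integral_comp_mul_left (fun y => Real.sin y) ha, integral_sin]
  rw [smul_eq_mul]
  field_simp

lemma icos (a : ℝ) (c d : ℝ) (ha : a ≠ 0) :
    ∫ y in c..d, Real.cos (a*y) = (Real.sin (a*d) - Real.sin (a*c))/a := by
  rw [intervalIntegral.integral_comp_mul_left (fun y => Real.cos y) ha, integral_cos]
  rw [smul_eq_mul]
  field_simp

lemma icos_div (a b : ℝ) (c d : ℝ) (ha : a ≠ 0) :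
    ∫ y in c..d, (b - Real.cos (a*y))/a
      = ((d-c)*b - (Real.sin (a*d) - Real.sin (a*c))/a)/a := by
  have h1 : IntervalIntegrable (fun y => b) volume c d := intervalIntegrable_const
  have h2 : IntervalIntegrable (fun y => Real.cos (a*y)) volume c d := by
    apply Continuous.intervalIntegrable; fun_prop
  simp only [div_eq_mul_inv, sub_mul]
  rw [intervalIntegral.integral_sub (h1.mul_const _) (h2.mul_const _),
    intervalIntegral.integral_mul_const, intervalIntegral.integral_mul_const,
    intervalIntegral.integral_const, icos a c d ha]
  field_simp; ring

lemma isin_div (a b : ℝ) (c d : ℝ) (ha : a ≠ 0) :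
    ∫ y in c..d, (b - Real.sin (a*y))/a
      = ((d-c)*b - (Real.cos (a*c) - Real.cos (a*d))/a)/a := by
  have h1 : IntervalIntegrable (fun y => b) volume c d := intervalIntegrable_const
  have h2 : IntervalIntegrable (fun y => Real.sin (a*y)) volume c d := by
    apply Continuous.intervalIntegrable; fun_prop
  simp only [div_eq_mul_inv, sub_mul]
  rw [intervalIntegral.integral_sub (h1.mul_const _) (h2.mul_const _),
    intervalIntegral.integral_mul_const, intervalIntegral.integral_mul_const,
    intervalIntegral.integral_const, isin a c d ha]
  field_simp; ring

/-- For each `n ≥ 1`, `φₙ(x) = sin(nπx)` is an eigenfunction of `K₁*K₁` with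
eigenvalue `1/(nπ)²`, and `ψₙ(x) = cos(nπx)` is an eigenfunction of `K₁K₁*`
with the same eigenvalue. -/
theorem eigenfunctions_K1 (n : ℕ) (hn : 1 ≤ n) (x : ℝ) (hx : x ∈ Icc (0:ℝ) 1) :
    K1sop (K1op (fun y => Real.sin ((n : ℝ) * π * y))) x
        = (1 / ((n : ℝ) * π)^2) * Real.sin ((n : ℝ) * π * x) ∧
    K1op (K1sop (fun y => Real.cos ((n : ℝ) * π * y))) x
        = (1 / ((n : ℝ) * π)^2) * Real.cos ((n : ℝ) * π * x) := by
  set a : ℝ := (n : ℝ) * π with ha_def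
  have ha : a ≠ 0 := by
    have : (0:ℝ) < (n:ℝ) := by exact_mod_cast hn
    positivity
  have hs : Real.sin a = 0 := by rw [ha_def]; exact Real.sin_nat_mul_pi n
  have harg : ∀ y : ℝ, (n : ℝ) * π * y = a * y := fun y => rfl
  constructor
  · -- K₁*K₁ sin = sin / a²
    have hg : K1op (fun y => Real.sin (a*y)) = fun t => -Real.cos (a*t)/a := by
      funext t
      simp only [K1op, Kop, Qop]
      rw [isin a 0 t ha,
        intervalIntegral.integral_congr (g := fun y => ((1:ℝ) - Real.cos (a*y))/a)
          (fun y _ => by rw [isin a 0 y ha]; norm_num),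
        icos_div a 1 0 1 ha]
      simp only [mul_zero, mul_one, Real.cos_zero, Real.sin_zero, hs]
      ring
    simp only [harg, hg, K1sop, Qop]
    have hq : (∫ y in (0:ℝ)..1, -Real.cos (a*y)/a) = 0 := by
      simp only [neg_div]
      rw [intervalIntegral.integral_neg, intervalIntegral.integral_div, icos a 0 1 ha]
      simp [hs]
    rw [hq]
    simp only [sub_zero, neg_div]
    rw [intervalIntegral.integral_neg, intervalIntegral.integral_div, icos a x 1 ha]
    simp only [mul_one, hs]
    ring
  · -- K₁K₁* cos = cos / a²
    have hg2 : K1sop (fun y => Real.cos (a*y)) = fun t => -Real.sin (a*t)/a := by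
      funext t
      simp only [K1sop, Qop]
      rw [intervalIntegral.integral_congr (g := fun y => Real.cos (a*y) - 0)
          (fun y _ => by
            rw [icos a 0 1 ha, mul_one, hs]; norm_num)]
      simp only [sub_zero]
      rw [icos a t 1 ha, mul_one, hs]
      ring
    simp only [harg, hg2, K1op, Kop, Qop]
    have hK : ∀ t:ℝ, (∫ z in (0:ℝ)..t, -Real.sin (a*z)/a) = (Real.cos (a*t) - 1)/(a*a) := by
      intro t
      simp only [neg_div]
      rw [intervalIntegral.integral_neg, intervalIntegral.integral_div, isin a 0 t ha]
      simp only [mul_zero, Real.cos_zero]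
      ring
    rw [hK x,
      intervalIntegral.integral_congr (g := fun y => (((1:ℝ) - Real.cos (a*y))/a) * (-1/a))
        (fun y _ => by rw [hK y]; ring),
      intervalIntegral.integral_mul_const, icos_div a 1 0 1 ha]
    simp only [mul_one, mul_zero, Real.sin_zero, hs]
    ring
end

section
/- Let K be a bounded operator on a Hilbert space H, K* its adjoint, L = KK*, and let Xₙ be a finite-dimensional subspace of H. If Pₙ is the orthogonal projection onto Xₙ and Qₙ is the orthogonal projection onto Lⁱ(Xₙ) for some i ≥ 1, then ‖(I - Qₙ)LⁱK‖ ≤ ‖(I - Qₙ)Lⁱ‖ · ‖(I - Pₙ)K‖, where ‖·‖ denotes the operator norm. -/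
open ContinuousLinearMap
open scoped RealInnerProductSpace

/-- Let `K` be a bounded operator on a Hilbert space `H`, `L = KK*`, `Xₙ` a
finite-dimensional subspace, `Pₙ` the orthogonal projection onto `Xₙ` and `Qₙ`
the orthogonal projection onto `Lⁱ(Xₙ)` for some `i ≥ 1`. Then
`‖(I - Qₙ)LⁱK‖ ≤ ‖(I - Qₙ)Lⁱ‖ ⬝ ‖(I - Pₙ)K‖`. -/
theorem projection_factorization_bound
    {H : Type*} [NormedAddCommGroup H] [InnerProductSpace ℝ H] [CompleteSpace H]
    (K : H →L[ℝ] H) (Xn : Submodule ℝ H) [FiniteDimensional ℝ Xn]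
    (i : ℕ) (hi : 1 ≤ i)
    (L : H →L[ℝ] H) (hL : L = K ∘L (ContinuousLinearMap.adjoint K))
    (Pn Qn : H →L[ℝ] H)
    (hPmem : ∀ x, Pn x ∈ Xn)
    (hPorth : ∀ x, ∀ v ∈ Xn, ⟪x - Pn x, v⟫ = 0)
    (hQmem : ∀ x, Qn x ∈ Xn.map ((L ^ i : H →L[ℝ] H) : H →ₗ[ℝ] H))
    (hQorth : ∀ x, ∀ v ∈ Xn.map ((L ^ i : H →L[ℝ] H) : H →ₗ[ℝ] H),
      ⟪x - Qn x, v⟫ = 0) :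
    ‖(ContinuousLinearMap.id ℝ H - Qn) ∘L (L ^ i) ∘L K‖
      ≤ ‖(ContinuousLinearMap.id ℝ H - Qn) ∘L (L ^ i)‖
        * ‖(ContinuousLinearMap.id ℝ H - Pn) ∘L K‖ := by
  have hker : ∀ v ∈ Xn.map ((L ^ i : H →L[ℝ] H) : H →ₗ[ℝ] H), v - Qn v = 0 := by
    intro v hv
    have h := hQorth v (v - Qn v) (Submodule.sub_mem _ hv (hQmem v))
    exact inner_self_eq_zero.mp h
  have key : (ContinuousLinearMap.id ℝ H - Qn) ∘L (L ^ i) ∘L K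
      = ((ContinuousLinearMap.id ℝ H - Qn) ∘L (L ^ i))
        ∘L ((ContinuousLinearMap.id ℝ H - Pn) ∘L K) := by
    ext x
    have hz : (L ^ i) (Pn (K x)) - Qn ((L ^ i) (Pn (K x))) = 0 :=
      hker _ (Submodule.mem_map_of_mem (hPmem (K x)))
    simp only [comp_apply, sub_apply, id_apply, map_sub]
    have := sub_eq_zero.mp hz
    rw [← this]
    abel
  rw [key]
  exact opNorm_comp_le _ _
end
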